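/- For every x ∈ {1, …, L}, b_x† (ζ†)^{(L−1)/2} Φ0 = 0. -/

import Mathlib

/-!
Summing `F` along a row gives `∑_y F_{x,y} ã_y† = -b_x†`, so by anticommutation
`ζ† = ∑_x b_x† ã_x†`. Modulo the span `W` of the `b_x†` one has `ã_x† ≡ (-1)^(x+1) ã_1†`, and
`∑_x (-1)^(x+1) b_x† = 0` because `L` is odd; hence `ζ† ∈ W * W`. The same relation shows
`dim W ≤ L - 1`. Every element of `W` squares to zero, so `W` generates a quotient of the exterior
algebra `⋀ W`, whose degree-`L` part vanishes; thus `b_x† (ζ†)^((L-1)/2) ∈ W ^ L = 0`.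
-/

noncomputable section

/-- `w_x = sin(δ/2)` for odd `x`, `cos(δ/2)` for even `x`. -/
def wR (δ : ℝ) (x : ℕ) : ℝ := if Odd x then Real.sin (δ/2) else Real.cos (δ/2)

/-- The antisymmetric coefficient matrix `F_{x,y}`. -/
def Fc (L : ℕ) (δ : ℝ) (x y : ℕ) : ℂ :=
  if y = x + 1 ∨ (x = 1 ∧ y = L) then -(Real.sin δ) / 2
  else if x = y + 1 ∨ (x = L ∧ y = 1) then (Real.sin δ) / 2
  else 0

variable {V : Type*} [AddCommGroup V] [Module ℂ V]

/-- `b_x† = w_x c_x† + w_{x+1} c_{x+1}†` for `1 ≤ x ≤ L−1`, and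
`b_L† = −w_1 c_1† + w_L c_L†` (applied to the family `c†`). -/
def bOp (L : ℕ) (δ : ℝ) (c : ℕ → Module.End ℂ V) (x : ℕ) : Module.End ℂ V :=
  if x = L then (-(wR δ 1) : ℂ) • c 1 + (wR δ L : ℂ) • c L
  else (wR δ x : ℂ) • c x + (wR δ (x+1) : ℂ) • c (x+1)

/-- `ã_x† = (1/sin δ)(Σ_{y=1}^{x} w_y c_y† − Σ_{y=x+1}^{L} w_y c_y†)` for `1 ≤ x ≤ L−1`,
and `ã_L† = (1/sin δ) Σ_{y=1}^{L} w_y c_y†`. -/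
def taOp (L : ℕ) (δ : ℝ) (c : ℕ → Module.End ℂ V) (x : ℕ) : Module.End ℂ V :=
  if x = L then ((Real.sin δ : ℂ))⁻¹ • ∑ y ∈ Finset.Icc 1 L, (wR δ y : ℂ) • c y
  else ((Real.sin δ : ℂ))⁻¹ •
    (∑ y ∈ Finset.Icc 1 x, (wR δ y : ℂ) • c y - ∑ y ∈ Finset.Icc (x+1) L, (wR δ y : ℂ) • c y)

/-- The pair operator `ζ† = Σ_{x,y=1}^{L} F_{x,y} ã_x† ã_y†`. -/
def zetaDag (L : ℕ) (δ : ℝ) (cdag : ℕ → Module.End ℂ V) : Module.End ℂ V :=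
  ∑ x ∈ Finset.Icc 1 L, ∑ y ∈ Finset.Icc 1 L,
    Fc L δ x y • (taOp L δ cdag x * taOp L δ cdag y)

open Finset

section ParityInduction
variable {R M : Type*} [Ring R] [AddCommGroup M] [Module R M]

theorem sub_mem_of_forall_add_two_sub_mem (W : Submodule R M) {a : ℕ → M} {L : ℕ}
    (hstep : ∀ x, 1 ≤ x → x + 2 ≤ L → a (x + 2) - a x ∈ W) {x : ℕ} (hx : 1 ≤ x) :
    ∀ k, x + 2 * k ≤ L → a (x + 2 * k) - a x ∈ W
  | 0, _ => by simp
  | k + 1, hk => by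
    have h := W.add_mem (sub_mem_of_forall_add_two_sub_mem W hstep hx k (by omega))
      (hstep (x + 2 * k) (by omega) (by omega))
    rwa [sub_add_sub_cancel', show x + 2 * k + 2 = x + 2 * (k + 1) by ring] at h

theorem sub_neg_one_pow_smul_mem (W : Submodule R M) {a : ℕ → M} {n : ℕ}
    (hstep : ∀ x, 1 ≤ x → x + 2 ≤ 2 * n + 1 → a (x + 2) - a x ∈ W)
    (hwrap : a 2 + a (2 * n + 1) ∈ W) :
    ∀ x ∈ Icc 1 (2 * n + 1), a x - (-1 : R) ^ (x + 1) • a 1 ∈ W := by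
  intro x hx
  rw [mem_Icc] at hx
  obtain ⟨k, rfl | rfl⟩ := Nat.even_or_odd' x
  · have h2 := sub_mem_of_forall_add_two_sub_mem W hstep (x := 2) (by norm_num) (k - 1) (by omega)
    have hL := sub_mem_of_forall_add_two_sub_mem W hstep le_rfl n (by omega)
    rw [show 2 + 2 * (k - 1) = 2 * k by omega] at h2
    have e : a (2 * k) - (-1 : R) ^ (2 * k + 1) • a 1
        = (a (2 * k) - a 2) + (a 2 + a (2 * n + 1)) - (a (1 + 2 * n) - a 1) := by
      rw [(Odd.neg_one_pow ⟨k, rfl⟩ : (-1 : R) ^ (2 * k + 1) = -1), neg_one_smul,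
        add_comm 1 (2 * n)]
      abel
    rw [e]
    exact W.sub_mem (W.add_mem h2 hwrap) hL
  · have h := sub_mem_of_forall_add_two_sub_mem W hstep le_rfl k (by omega)
    rwa [(Even.neg_one_pow ⟨k + 1, by ring⟩ : (-1 : R) ^ (2 * k + 1 + 1) = 1), one_smul,
      add_comm]

end ParityInduction

section Anticommuting
variable {R A : Type*} [CommRing R] [Ring A] [Algebra R A]

theorem mul_add_mul_eq_zero_of_mem_span {s : Set A} (hs : ∀ u ∈ s, ∀ v ∈ s, u * v + v * u = 0)
    {u v : A} (hu : u ∈ Submodule.span R s) (hv : v ∈ Submodule.span R s) : u * v + v * u = 0 := by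
  induction hu, hv using Submodule.span_induction₂ with
  | mem_mem x y hx hy => exact hs x hx y hy
  | zero_left y _ => simp
  | zero_right x _ => simp
  | add_left x y z _ _ _ hxz hyz =>
    rw [add_mul, mul_add, add_add_add_comm, hxz, hyz, add_zero]
  | add_right x y z _ _ _ hxy hxz =>
    rw [mul_add, add_mul, add_add_add_comm, hxy, hxz, add_zero]
  | smul_left r x y _ _ h => rw [smul_mul_assoc, mul_smul_comm, ← smul_add, h, smul_zero]
  | smul_right r x y _ _ h => rw [smul_mul_assoc, mul_smul_comm, ← smul_add, h, smul_zero]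

theorem mul_self_eq_zero_of_mem_span {K : Type*} [Field K] [NeZero (2 : K)] [Algebra K A]
    {s : Set A} (hs : ∀ u ∈ s, ∀ v ∈ s, u * v + v * u = 0) {u : A} (hu : u ∈ Submodule.span K s) :
    u * u = 0 := by
  have h := mul_add_mul_eq_zero_of_mem_span hs hu hu
  rw [← two_smul K] at h
  exact (smul_eq_zero.mp h).resolve_left two_ne_zero

end Anticommuting

section ExteriorPower
variable {K A : Type*} [Field K] [Ring A] [Algebra K A]

theorem Submodule.pow_eq_bot_of_mul_self_eq_zero (W : Submodule K A) [FiniteDimensional K W]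
    (hW : ∀ w ∈ W, w * w = 0) {k : ℕ} (hk : Module.finrank K W < k) : W ^ k = ⊥ := by
  have hrange : (LinearMap.range (ExteriorAlgebra.ι K (M := W))).map
      (ExteriorAlgebra.lift K ⟨W.subtype, fun w => hW (W.subtype w) w.2⟩).toLinearMap = W := by
    rw [← LinearMap.range_comp, ExteriorAlgebra.ι_comp_lift, Submodule.range_subtype]
  have hbot : ⋀[K]^k W = ⊥ := by
    rw [← Submodule.finrank_eq_zero, exteriorPower.finrank_eq, Nat.choose_eq_zero_of_lt hk]
  rw [← hrange, ← Submodule.map_pow]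
  change Submodule.map _ (⋀[K]^k W) = ⊥
  rw [hbot, Submodule.map_bot]

end ExteriorPower

section Chain

variable (L : ℕ) (δ : ℝ) (cdag : ℕ → Module.End ℂ V)

def weightedPartialSum (m : ℕ) : Module.End ℂ V := ∑ y ∈ Icc 1 m, (wR δ y : ℂ) • cdag y

theorem weightedPartialSum_zero : weightedPartialSum δ cdag 0 = 0 := by
  simp [weightedPartialSum]

theorem weightedPartialSum_succ (m : ℕ) :
    weightedPartialSum δ cdag (m + 1) =
      weightedPartialSum δ cdag m + (wR δ (m + 1) : ℂ) • cdag (m + 1) :=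
  sum_Icc_succ_top (by omega) _

theorem weightedPartialSum_eq_add_sum {m k : ℕ} (h : m ≤ k) :
    weightedPartialSum δ cdag k =
      weightedPartialSum δ cdag m + ∑ y ∈ Icc (m + 1) k, (wR δ y : ℂ) • cdag y := by
  induction k, h using Nat.le_induction with
  | base => simp
  | succ k hk ih =>
    rw [weightedPartialSum_succ, ih, sum_Icc_succ_top (by omega), add_assoc]

theorem taOp_eq_weightedPartialSum {x : ℕ} (hx : x ≤ L) :
    taOp L δ cdag x = (Real.sin δ : ℂ)⁻¹ •
      ((2 : ℂ) • weightedPartialSum δ cdag x - weightedPartialSum δ cdag L) := by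
  rw [taOp]
  split_ifs with h
  · subst h
    rw [← weightedPartialSum]
    module
  · rw [← weightedPartialSum, weightedPartialSum_eq_add_sum δ cdag hx]
    module

theorem taOp_zero : taOp L δ cdag 0 = -taOp L δ cdag L := by
  rw [taOp_eq_weightedPartialSum L δ cdag (Nat.zero_le L),
    taOp_eq_weightedPartialSum L δ cdag le_rfl, weightedPartialSum_zero]
  module

theorem taOp_add_two_sub {m : ℕ} (hm : m + 2 ≤ L) :
    taOp L δ cdag (m + 2) - taOp L δ cdag m =
      (Real.sin δ : ℂ)⁻¹ • (2 : ℂ) • bOp L δ cdag (m + 1) := by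
  rw [taOp_eq_weightedPartialSum L δ cdag hm, taOp_eq_weightedPartialSum L δ cdag (by omega),
    bOp, if_neg (by omega), weightedPartialSum_succ, weightedPartialSum_succ]
  module

theorem taOp_one_add_taOp_sub_one (hL : 1 ≤ L) :
    taOp L δ cdag 1 + taOp L δ cdag (L - 1) = -((Real.sin δ : ℂ)⁻¹ • (2 : ℂ) • bOp L δ cdag L) := by
  obtain ⟨m, rfl⟩ : ∃ m, L = m + 1 := ⟨L - 1, by omega⟩
  rw [taOp_eq_weightedPartialSum _ δ cdag (by omega),
    taOp_eq_weightedPartialSum _ δ cdag (by omega),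
    bOp, if_pos rfl, Nat.add_sub_cancel, weightedPartialSum_succ δ cdag m,
    weightedPartialSum_succ δ cdag 0, weightedPartialSum_zero]
  module

theorem sum_neg_one_pow_smul_bOp (hL : Odd L) :
    ∑ x ∈ Icc 1 (L - 1), (-1 : ℂ) ^ x • bOp L δ cdag x = bOp L δ cdag L := by
  have telescope : ∀ m < L, ∑ x ∈ Icc 1 m, (-1 : ℂ) ^ x • bOp L δ cdag x =
      (-1 : ℂ) ^ m • (wR δ (m + 1) : ℂ) • cdag (m + 1) - (wR δ 1 : ℂ) • cdag 1 := by
    intro m hm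
    induction m with
    | zero => simp
    | succ m ih =>
      rw [sum_Icc_succ_top (by omega), ih (by omega), bOp, if_neg (by omega), pow_succ]
      module
  obtain ⟨n, rfl⟩ := hL
  rw [telescope _ (by omega), Nat.add_sub_cancel,
    (Even.neg_one_pow ⟨n, two_mul n⟩ : (-1 : ℂ) ^ (2 * n) = 1), bOp, if_pos rfl]
  module

theorem Fc_eq_zero {x y : ℕ} (h₁ : y ≠ x + 1) (h₂ : x ≠ y + 1) (h₃ : ¬(x = 1 ∧ y = L))
    (h₄ : ¬(x = L ∧ y = 1)) : Fc L δ x y = 0 := by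
  rw [Fc, if_neg (by tauto), if_neg (by tauto)]

theorem sum_Fc_smul_taOp (hs : (Real.sin δ : ℂ) ≠ 0) (hL : 3 ≤ L) {x : ℕ} (hx : x ∈ Icc 1 L) :
    ∑ y ∈ Icc 1 L, Fc L δ x y • taOp L δ cdag y = -bOp L δ cdag x := by
  have two_neighbours : ∀ i ∈ Icc 1 L, ∀ j ∈ Icc 1 L, i ≠ j →
      (∀ y, 1 ≤ y → y ≤ L → y ≠ i → y ≠ j → Fc L δ x y = 0) →
        ∑ y ∈ Icc 1 L, Fc L δ x y • taOp L δ cdag y =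
          Fc L δ x i • taOp L δ cdag i + Fc L δ x j • taOp L δ cdag j :=
    fun i hi j hj hij hF => sum_eq_add_of_mem i j hi hj hij fun y hy hyij => by
      rw [hF y (mem_Icc.mp hy).1 (mem_Icc.mp hy).2 hyij.1 hyij.2, zero_smul]
  rw [mem_Icc] at hx
  rcases (by omega : x = 1 ∨ (1 < x ∧ x < L) ∨ x = L) with rfl | ⟨h1, h2⟩ | hxL
  · rw [two_neighbours 2 (mem_Icc.mpr (by omega)) L (mem_Icc.mpr (by omega)) (by omega)
      (fun y _ _ _ _ => Fc_eq_zero L δ (by omega) (by omega) (by omega) (by omega))]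
    have h := taOp_add_two_sub L δ cdag (m := 0) (by omega)
    rw [taOp_zero] at h
    rw [Fc, if_pos (Or.inl rfl), Fc, if_pos (Or.inr ⟨rfl, rfl⟩)]
    -- otherwise `field_simp` turns `↑(Real.sin δ)` into `Complex.sin ↑δ` and no longer sees `hs`
    generalize (Real.sin δ : ℂ) = s at hs h ⊢
    linear_combination (norm := match_scalars <;> field_simp <;> ring) (-s / 2) • h
  · obtain ⟨m, rfl⟩ : ∃ m, x = m + 1 := ⟨x - 1, by omega⟩
    rw [two_neighbours m (mem_Icc.mpr (by omega)) (m + 2) (mem_Icc.mpr (by omega)) (by omega)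
      (fun y _ _ _ _ => Fc_eq_zero L δ (by omega) (by omega) (by omega) (by omega))]
    have h := taOp_add_two_sub L δ cdag (m := m) (by omega)
    rw [Fc, if_neg (by omega), if_pos (Or.inl rfl), Fc, if_pos (Or.inl rfl)]
    generalize (Real.sin δ : ℂ) = s at hs h ⊢
    linear_combination (norm := match_scalars <;> field_simp <;> ring) (-s / 2) • h
  · subst x
    rw [two_neighbours 1 (mem_Icc.mpr (by omega)) (L - 1) (mem_Icc.mpr (by omega)) (by omega)
      (fun y _ _ _ _ => Fc_eq_zero L δ (by omega) (by omega) (by omega) (by omega))]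
    have h := taOp_one_add_taOp_sub_one L δ cdag (by omega)
    rw [Fc, if_neg (by omega), if_pos (Or.inr ⟨rfl, rfl⟩), Fc, if_neg (by omega),
      if_pos (Or.inl (by omega))]
    generalize (Real.sin δ : ℂ) = s at hs h ⊢
    linear_combination (norm := match_scalars <;> field_simp <;> ring) (s / 2) • h

theorem cdag_image_anticomm
    (car_dd : ∀ x ∈ Icc 1 L, ∀ y ∈ Icc 1 L, cdag x * cdag y + cdag y * cdag x = 0) :
    ∀ u ∈ cdag '' ↑(Icc 1 L), ∀ v ∈ cdag '' ↑(Icc 1 L), u * v + v * u = 0 := by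
  rintro _ ⟨x, hx, rfl⟩ _ ⟨y, hy, rfl⟩
  exact car_dd x hx y hy

theorem smul_cdag_mem_span {y : ℕ} (hy : y ∈ Icc 1 L) (r : ℂ) :
    r • cdag y ∈ Submodule.span ℂ (cdag '' ↑(Icc 1 L)) :=
  Submodule.smul_mem _ r (Submodule.subset_span ⟨y, hy, rfl⟩)

theorem taOp_mem_span {x : ℕ} (hx : x ≤ L) :
    taOp L δ cdag x ∈ Submodule.span ℂ (cdag '' ↑(Icc 1 L)) := by
  have hsum : ∀ m ≤ L, weightedPartialSum δ cdag m ∈ Submodule.span ℂ (cdag '' ↑(Icc 1 L)) :=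
    fun m hm => Submodule.sum_mem _ fun y hy => smul_cdag_mem_span L cdag
      (mem_Icc.mpr ⟨(mem_Icc.mp hy).1, (mem_Icc.mp hy).2.trans hm⟩) _
  rw [taOp_eq_weightedPartialSum L δ cdag hx]
  exact Submodule.smul_mem _ _ (Submodule.sub_mem _ (Submodule.smul_mem _ _ (hsum x hx))
    (hsum L le_rfl))

theorem bOp_mem_span {x : ℕ} (hx : x ∈ Icc 1 L) :
    bOp L δ cdag x ∈ Submodule.span ℂ (cdag '' ↑(Icc 1 L)) := by
  rw [mem_Icc] at hx
  rw [bOp]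
  split_ifs <;>
  exact Submodule.add_mem _ (smul_cdag_mem_span L cdag (mem_Icc.mpr (by omega)) _)
    (smul_cdag_mem_span L cdag (mem_Icc.mpr (by omega)) _)

theorem zetaDag_eq_sum_bOp_mul_taOp (hs : (Real.sin δ : ℂ) ≠ 0) (hL : 3 ≤ L)
    (car_dd : ∀ x ∈ Icc 1 L, ∀ y ∈ Icc 1 L, cdag x * cdag y + cdag y * cdag x = 0) :
    zetaDag L δ cdag = ∑ x ∈ Icc 1 L, bOp L δ cdag x * taOp L δ cdag x := by
  refine sum_congr rfl fun x hx => ?_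
  calc ∑ y ∈ Icc 1 L, Fc L δ x y • (taOp L δ cdag x * taOp L δ cdag y)
      = taOp L δ cdag x * ∑ y ∈ Icc 1 L, Fc L δ x y • taOp L δ cdag y := by
        simp only [mul_sum, mul_smul_comm]
    _ = -(taOp L δ cdag x * bOp L δ cdag x) := by
        rw [sum_Fc_smul_taOp L δ cdag hs hL hx, mul_neg]
    _ = bOp L δ cdag x * taOp L δ cdag x :=
        neg_eq_of_add_eq_zero_right (mul_add_mul_eq_zero_of_mem_span
          (cdag_image_anticomm L cdag car_dd) (taOp_mem_span L δ cdag (mem_Icc.mp hx).2)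
          (bOp_mem_span L δ cdag hx))

def bSpan : Submodule ℂ (Module.End ℂ V) :=
  Submodule.span ℂ (bOp L δ cdag '' ↑(Icc 1 (L - 1)))

instance : FiniteDimensional ℂ (bSpan L δ cdag) :=
  FiniteDimensional.span_of_finite ℂ ((Icc 1 (L - 1)).finite_toSet.image _)

theorem finrank_bSpan_le : Module.finrank ℂ (bSpan L δ cdag) ≤ L - 1 := by
  classical
  rw [bSpan, ← coe_image]
  exact (finrank_span_finset_le_card _).trans (card_image_le.trans (by simp))

theorem bSpan_le_span : bSpan L δ cdag ≤ Submodule.span ℂ (cdag '' ↑(Icc 1 L)) := by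
  rw [bSpan, Submodule.span_le]
  rintro _ ⟨x, hx, rfl⟩
  rw [coe_Icc, Set.mem_Icc] at hx
  exact bOp_mem_span L δ cdag (mem_Icc.mpr (by omega))

theorem bOp_mem_bSpan (hL : Odd L) {x : ℕ} (hx : x ∈ Icc 1 L) :
    bOp L δ cdag x ∈ bSpan L δ cdag := by
  rw [mem_Icc] at hx
  obtain hxL | rfl := hx.2.lt_or_eq
  · exact Submodule.subset_span (Set.mem_image_of_mem _ (mem_Icc.mpr (by omega)))
  · rw [← sum_neg_one_pow_smul_bOp x δ cdag hL]
    exact Submodule.sum_mem _ fun y hy =>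
      Submodule.smul_mem _ _ (Submodule.subset_span (Set.mem_image_of_mem _ hy))

theorem taOp_sub_mem_bSpan (hL : 1 < L) (hLodd : Odd L) :
    ∀ x ∈ Icc 1 L, taOp L δ cdag x - (-1 : ℂ) ^ (x + 1) • taOp L δ cdag 1 ∈ bSpan L δ cdag := by
  obtain ⟨n, rfl⟩ := hLodd
  refine sub_neg_one_pow_smul_mem _ (fun x hx₁ hx => ?_) ?_
  · rw [taOp_add_two_sub _ δ cdag hx]
    exact Submodule.smul_mem _ _ (Submodule.smul_mem _ _
      (bOp_mem_bSpan _ δ cdag ⟨n, rfl⟩ (mem_Icc.mpr (by omega))))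
  · rw [← sub_neg_eq_add, ← taOp_zero, taOp_add_two_sub _ δ cdag (m := 0) (by omega)]
    exact Submodule.smul_mem _ _ (Submodule.smul_mem _ _
      (bOp_mem_bSpan _ δ cdag ⟨n, rfl⟩ (mem_Icc.mpr (by omega))))

theorem sum_neg_one_pow_succ_smul_bOp (hL : Odd L) :
    ∑ x ∈ Icc 1 L, (-1 : ℂ) ^ (x + 1) • bOp L δ cdag x = 0 := by
  have h := sum_neg_one_pow_smul_bOp L δ cdag hL
  obtain ⟨n, rfl⟩ := hL
  rw [Nat.add_sub_cancel] at h
  rw [sum_Icc_succ_top (by omega),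
    (Even.neg_one_pow ⟨n + 1, by ring⟩ : (-1 : ℂ) ^ (2 * n + 1 + 1) = 1), one_smul, ← h, ← sum_add_distrib]
  exact sum_eq_zero fun x _ => by rw [pow_succ]; module

theorem zetaDag_mem_bSpan_sq (hs : (Real.sin δ : ℂ) ≠ 0) (hL : 3 ≤ L) (hLodd : Odd L)
    (car_dd : ∀ x ∈ Icc 1 L, ∀ y ∈ Icc 1 L, cdag x * cdag y + cdag y * cdag x = 0) :
    zetaDag L δ cdag ∈ bSpan L δ cdag ^ 2 := by
  have hsplit : zetaDag L δ cdag = ∑ x ∈ Icc 1 L,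
      bOp L δ cdag x * (taOp L δ cdag x - (-1 : ℂ) ^ (x + 1) • taOp L δ cdag 1) +
        (∑ x ∈ Icc 1 L, (-1 : ℂ) ^ (x + 1) • bOp L δ cdag x) * taOp L δ cdag 1 := by
    simp only [zetaDag_eq_sum_bOp_mul_taOp L δ cdag hs hL car_dd, sum_mul, ← sum_add_distrib,
      mul_sub, mul_smul_comm, smul_mul_assoc, sub_add_cancel]
  rw [hsplit, sum_neg_one_pow_succ_smul_bOp L δ cdag hLodd, zero_mul, add_zero, pow_two]
  exact Submodule.sum_mem _ fun x hx => Submodule.mul_mem_mul (bOp_mem_bSpan L δ cdag hLodd hx)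
    (taOp_sub_mem_bSpan L δ cdag (by omega) hLodd x hx)

theorem bOp_mul_zetaDag_pow_eq_zero (hs : (Real.sin δ : ℂ) ≠ 0) (hL : 3 ≤ L) (hLodd : Odd L)
    (car_dd : ∀ x ∈ Icc 1 L, ∀ y ∈ Icc 1 L, cdag x * cdag y + cdag y * cdag x = 0)
    {x : ℕ} (hx : x ∈ Icc 1 L) : bOp L δ cdag x * zetaDag L δ cdag ^ ((L - 1) / 2) = 0 := by
  have hsq : ∀ w ∈ bSpan L δ cdag, w * w = 0 := fun w hw =>
    mul_self_eq_zero_of_mem_span (cdag_image_anticomm L cdag car_dd) (bSpan_le_span L δ cdag hw)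
  have hmem : bOp L δ cdag x * zetaDag L δ cdag ^ ((L - 1) / 2) ∈
      bSpan L δ cdag ^ (2 * ((L - 1) / 2) + 1) := by
    rw [pow_succ' (bSpan L δ cdag), pow_mul]
    exact Submodule.mul_mem_mul (bOp_mem_bSpan L δ cdag hLodd hx)
      (Submodule.pow_mem_pow _ (zetaDag_mem_bSpan_sq L δ cdag hs hL hLodd car_dd) _)
  obtain ⟨n, rfl⟩ := hLodd
  rwa [(bSpan _ δ cdag).pow_eq_bot_of_mul_self_eq_zero hsq
    ((finrank_bSpan_le _ δ cdag).trans_lt (by omega)), Submodule.mem_bot] at hmem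

end Chain

theorem statement10_general (L : ℕ) (hL3 : 3 ≤ L) (hLodd : Odd L)
    (δ : ℝ) (hδ0 : 0 < δ) (hδ1 : δ ≤ Real.pi / 2)
    (cdag : ℕ → Module.End ℂ V)
    (car_dd : ∀ x ∈ Finset.Icc 1 L, ∀ y ∈ Finset.Icc 1 L,
      cdag x * cdag y + cdag y * cdag x = 0)
    (Φ0 : V) :
    ∀ x ∈ Finset.Icc 1 L,
      bOp L δ cdag x (((zetaDag L δ cdag)^((L-1)/2)) Φ0) = 0 := by
  have hs : (Real.sin δ : ℂ) ≠ 0 := Complex.ofReal_ne_zero.mpr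
    (Real.sin_pos_of_pos_of_lt_pi hδ0 (by linarith [Real.pi_pos])).ne'
  intro x hx
  rw [← Module.End.mul_apply, bOp_mul_zetaDag_pow_eq_zero L δ cdag hs hL3 hLodd car_dd hx,
    LinearMap.zero_apply]

/-- for every `x ∈ {1,…,L}`, `b_x† (ζ†)^{(L−1)/2} Φ0 = 0`. -/
theorem statement10 (L : ℕ) (hL3 : 3 ≤ L) (hLodd : Odd L)
    (δ : ℝ) (hδ0 : 0 < δ) (hδ1 : δ ≤ Real.pi / 2)
    (c cdag : ℕ → Module.End ℂ V)
    (car_cc : ∀ x ∈ Finset.Icc 1 L, ∀ y ∈ Finset.Icc 1 L, c x * c y + c y * c x = 0)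
    (car_dd : ∀ x ∈ Finset.Icc 1 L, ∀ y ∈ Finset.Icc 1 L,
      cdag x * cdag y + cdag y * cdag x = 0)
    (car_dc : ∀ x ∈ Finset.Icc 1 L, ∀ y ∈ Finset.Icc 1 L,
      cdag x * c y + c y * cdag x = if x = y then 1 else 0)
    (Φ0 : V) (hΦ0 : ∀ x ∈ Finset.Icc 1 L, c x Φ0 = 0) :
    ∀ x ∈ Finset.Icc 1 L,
      bOp L δ cdag x (((zetaDag L δ cdag)^((L-1)/2)) Φ0) = 0 :=
  statement10_general L hL3 hLodd δ hδ0 hδ1 cdag car_dd Φ0
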